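/- arXiv:1212.0117 — 7 statements merged into one kernel-verified Lean document; each statement's English description precedes it below -/
import Mathlib

section
/- Suppose 𝒯 is a test cover of [n], ℱ ⊆ 𝒯, and k is a natural number such that the number of classes induced by ℱ is at least |ℱ| + k. Then there exists a collection ℱ' with ℱ ⊆ ℱ' ⊆ 𝒯 such that ℱ' is a test cover of [n] and |ℱ'| ≤ n − k. -/
/-- A test `T ⊆ [n]` separates items `i`, `j` if exactly one of them lies in `T`. -/
def Separates {n : ℕ} (T : Finset (Fin n)) (i j : Fin n) : Prop :=
  (i ∈ T ∧ j ∉ T) ∨ (i ∉ T ∧ j ∈ T)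

/-- A collection of tests is a test cover of `[n]` if every pair of distinct
items is separated by some test in the collection. -/
def IsTestCover {n : ℕ} (𝒯 : Finset (Finset (Fin n))) : Prop :=
  ∀ i j : Fin n, i ≠ j → ∃ T ∈ 𝒯, Separates T i j

/-- The number of classes induced by a collection `ℱ` of tests: two items are
equivalent iff no test of `ℱ` separates them, i.e. iff they belong to exactly
the same tests of `ℱ`. -/
def numClasses {n : ℕ} (ℱ : Finset (Finset (Fin n))) : ℕ :=
  (Finset.univ.image (fun i : Fin n => ℱ.filter (fun T => i ∈ T))).card

/-- The class induced by `ℱ` containing the item `i`. -/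
def classOf {n : ℕ} (ℱ : Finset (Finset (Fin n))) (i : Fin n) : Finset (Fin n) :=
  Finset.univ.filter (fun j => ∀ T ∈ ℱ, (i ∈ T ↔ j ∈ T))

lemma numClasses_le {n : ℕ} (ℱ : Finset (Finset (Fin n))) : numClasses ℱ ≤ n := by
  unfold numClasses
  exact (Finset.card_image_le).trans (by simp)

lemma numClasses_insert {n : ℕ} (ℱ : Finset (Finset (Fin n))) (T : Finset (Fin n))
    (hT : T ∉ ℱ) (i j : Fin n) (hsep : Separates T i j)
    (hns : ∀ S ∈ ℱ, ¬ Separates S i j) :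
    numClasses ℱ + 1 ≤ numClasses (insert T ℱ) := by
  set g : Fin n → Finset (Finset (Fin n)) :=
    fun x => (insert T ℱ).filter (fun S => x ∈ S) with hg
  set f : Fin n → Finset (Finset (Fin n)) :=
    fun x => ℱ.filter (fun S => x ∈ S) with hf
  have hfg : ∀ x, f x = (g x).erase T := by
    intro x
    ext S
    simp only [hf, hg, Finset.mem_filter, Finset.mem_erase, Finset.mem_insert]
    constructor
    · rintro ⟨hS, hx⟩
      exact ⟨fun h => hT (h ▸ hS), Or.inr hS, hx⟩
    · rintro ⟨hne, hS | hS, hx⟩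
      · exact absurd hS hne
      · exact ⟨hS, hx⟩
  have himg : Finset.univ.image f = (Finset.univ.image g).image (fun S => S.erase T) := by
    rw [Finset.image_image]
    exact Finset.image_congr (fun x _ => hfg x)
  have hgij : g i ≠ g j := by
    intro h
    rcases hsep with ⟨hi, hj⟩ | ⟨hi, hj⟩
    · have : T ∈ g i := by simp [hg, hi]
      rw [h] at this
      simp [hg, hj] at this
    · have : T ∈ g j := by simp [hg, hj]
      rw [← h] at this
      simp [hg, hi] at this
  have hfij : f i = f j := by
    ext S
    simp only [hf, Finset.mem_filter]
    constructor
    · rintro ⟨hS, hx⟩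
      refine ⟨hS, ?_⟩
      have := hns S hS
      unfold Separates at this
      tauto
    · rintro ⟨hS, hx⟩
      refine ⟨hS, ?_⟩
      have := hns S hS
      unfold Separates at this
      tauto
  have hlt : (Finset.univ.image f).card < (Finset.univ.image g).card := by
    rw [himg]
    rcases lt_or_eq_of_le (Finset.card_image_le
      (s := Finset.univ.image g) (f := fun S => S.erase T)) with h | h
    · exact h
    · exfalso
      have hinj := Finset.injOn_of_card_image_eq h
      have hgi : g i ∈ Finset.univ.image g := Finset.mem_image_of_mem g (Finset.mem_univ i)
      have hgj : g j ∈ Finset.univ.image g := Finset.mem_image_of_mem g (Finset.mem_univ j)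
      have : (g i).erase T = (g j).erase T := by rw [← hfg i, ← hfg j, hfij]
      exact hgij (hinj hgi hgj this)
  exact hlt

lemma aux_statement (n : ℕ) (𝒯 : Finset (Finset (Fin n))) (h𝒯 : IsTestCover 𝒯) :
    ∀ m (ℱ : Finset (Finset (Fin n))) (k : ℕ), (𝒯 \ ℱ).card ≤ m → ℱ ⊆ 𝒯 →
      ℱ.card + k ≤ numClasses ℱ →
      ∃ ℱ' : Finset (Finset (Fin n)),
        ℱ ⊆ ℱ' ∧ ℱ' ⊆ 𝒯 ∧ IsTestCover ℱ' ∧ ℱ'.card ≤ n - k := by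
  intro m
  induction m with
  | zero =>
    intro ℱ k hm hsub hcl
    have : ℱ = 𝒯 := by
      have := Finset.card_eq_zero.mp (Nat.le_zero.mp hm)
      have h2 : 𝒯 ⊆ ℱ := fun x hx => by
        by_contra hxn
        have : x ∈ 𝒯 \ ℱ := Finset.mem_sdiff.mpr ⟨hx, hxn⟩
        simp [‹𝒯 \ ℱ = ∅›] at this
      exact Finset.Subset.antisymm hsub h2
    subst this
    refine ⟨ℱ, subset_rfl, subset_rfl, h𝒯, ?_⟩
    have := numClasses_le ℱ
    omega
  | succ m ih =>
    intro ℱ k hm hsub hcl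
    by_cases hcov : IsTestCover ℱ
    · refine ⟨ℱ, subset_rfl, hsub, hcov, ?_⟩
      have := numClasses_le ℱ
      omega
    · unfold IsTestCover at hcov
      push_neg at hcov
      obtain ⟨i, j, hij, hns⟩ := hcov
      obtain ⟨T, hT𝒯, hsep⟩ := h𝒯 i j hij
      have hTℱ : T ∉ ℱ := fun h => hns T h hsep
      have h1 : numClasses ℱ + 1 ≤ numClasses (insert T ℱ) :=
        numClasses_insert ℱ T hTℱ i j hsep hns
      have h2 : (insert T ℱ).card = ℱ.card + 1 := Finset.card_insert_of_notMem hTℱ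
      have h3 : (𝒯 \ insert T ℱ).card ≤ m := by
        have : 𝒯 \ insert T ℱ = (𝒯 \ ℱ).erase T := by
          ext x; simp [Finset.mem_sdiff, Finset.mem_erase, Finset.mem_insert]; tauto
        rw [this]
        have hTmem : T ∈ 𝒯 \ ℱ := Finset.mem_sdiff.mpr ⟨hT𝒯, hTℱ⟩
        have := Finset.card_erase_of_mem hTmem
        omega
      have h4 : insert T ℱ ⊆ 𝒯 := Finset.insert_subset hT𝒯 hsub
      obtain ⟨ℱ', h5, h6, h7, h8⟩ := ih (insert T ℱ) k h3 h4 (by omega)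
      exact ⟨ℱ', (Finset.subset_insert T ℱ).trans h5, h6, h7, h8⟩

/-- If `𝒯` is a test cover, `ℱ ⊆ 𝒯` and `ℱ` induces at least
`|ℱ| + k` classes, then `ℱ` extends to a test cover `ℱ' ⊆ 𝒯` of size `≤ n - k`. -/
theorem statement_1 (n : ℕ) (𝒯 ℱ : Finset (Finset (Fin n))) (k : ℕ)
    (h𝒯 : IsTestCover 𝒯) (hℱ : ℱ ⊆ 𝒯) (hcl : ℱ.card + k ≤ numClasses ℱ) :
    ∃ ℱ' : Finset (Finset (Fin n)),
      ℱ ⊆ ℱ' ∧ ℱ' ⊆ 𝒯 ∧ IsTestCover ℱ' ∧ ℱ'.card ≤ n - k :=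
  aux_statement n 𝒯 h𝒯 (𝒯 \ ℱ).card ℱ k le_rfl hℱ hcl
end

section
/- Suppose 𝒯 is a test cover of [n] that contains every singleton {i} for i ∈ [n], ℱ ⊆ 𝒯, and k is a natural number such that the number of classes induced by ℱ is at least |ℱ| + k. Then there exists a collection ℱ' with ℱ ⊆ ℱ' ⊆ 𝒯 such that ℱ' is a test cover of [n], |ℱ'| ≤ n − k, and every test in ℱ' \ ℱ is a singleton. -/
/-- If moreover `𝒯` contains all singletons, the extension of `ℱ`
to a test cover of size `≤ n - k` can be achieved by adding only singletons. -/
theorem statement_2 (n : ℕ) (𝒯 ℱ : Finset (Finset (Fin n))) (k : ℕ)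
    (h𝒯 : IsTestCover 𝒯) (hsing : ∀ i : Fin n, {i} ∈ 𝒯)
    (hℱ : ℱ ⊆ 𝒯) (hcl : ℱ.card + k ≤ numClasses ℱ) :
    ∃ ℱ' : Finset (Finset (Fin n)),
      ℱ ⊆ ℱ' ∧ ℱ' ⊆ 𝒯 ∧ IsTestCover ℱ' ∧ ℱ'.card ≤ n - k ∧
      ∀ T ∈ ℱ' \ ℱ, ∃ i : Fin n, T = {i} := by
  classical
  set f : Fin n → Finset (Finset (Fin n)) := fun i => ℱ.filter (fun T => i ∈ T) with hf
  set R : Finset (Fin n) := Finset.univ.filter (fun i => ∀ j, f j = f i → i ≤ j) with hR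
  have hRinj : Set.InjOn f R := by
    intro i hi j hj hij
    simp only [hR, Finset.coe_filter, Set.mem_setOf_eq] at hi hj
    exact le_antisymm (hi.2 j hij.symm) (hj.2 i hij)
  have himg : R.image f = Finset.univ.image f := by
    apply Finset.Subset.antisymm
    · exact Finset.image_subset_image (Finset.filter_subset _ _)
    · intro c hc
      rw [Finset.mem_image] at hc ⊢
      obtain ⟨i, _, rfl⟩ := hc
      have hne : (Finset.univ.filter (fun j => f j = f i)).Nonempty := ⟨i, by simp⟩
      set m := (Finset.univ.filter (fun j => f j = f i)).min' hne with hm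
      have hmmem : m ∈ Finset.univ.filter (fun j => f j = f i) := Finset.min'_mem _ hne
      rw [Finset.mem_filter] at hmmem
      refine ⟨m, ?_, hmmem.2⟩
      simp only [hR, Finset.mem_filter, Finset.mem_univ, true_and]
      intro j hj
      exact Finset.min'_le _ j (by simp [hj.trans hmmem.2])
  have hRcard : R.card = numClasses ℱ := by
    rw [← Finset.card_image_of_injOn hRinj, himg]; rfl
  have hRn : R.card ≤ n := by
    simpa using Finset.card_le_card (R.subset_univ)
  refine ⟨ℱ ∪ (Finset.univ \ R).image (fun i => ({i} : Finset (Fin n))), ?_, ?_, ?_, ?_, ?_⟩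
  · exact Finset.subset_union_left
  · apply Finset.union_subset hℱ
    intro T hT
    rw [Finset.mem_image] at hT
    obtain ⟨i, _, rfl⟩ := hT
    exact hsing i
  · intro i j hij
    by_cases hsep : ∃ T ∈ ℱ, Separates T i j
    · obtain ⟨T, hT, hTs⟩ := hsep
      exact ⟨T, Finset.mem_union_left _ hT, hTs⟩
    · push_neg at hsep
      have hfij : f i = f j := by
        ext T
        simp only [hf, Finset.mem_filter, and_congr_right_iff]
        intro hT
        have := hsep T hT
        unfold Separates at this
        tauto
      by_cases hiR : i ∈ R
      · have hjR : j ∉ R := by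
          intro hjR
          exact hij (hRinj hiR hjR hfij)
        refine ⟨{j}, Finset.mem_union_right _ ?_, Or.inr ⟨by simp [hij], by simp⟩⟩
        exact Finset.mem_image_of_mem _ (by simp [hjR])
      · refine ⟨{i}, Finset.mem_union_right _ ?_, Or.inl ⟨by simp, by simp [Ne.symm hij]⟩⟩
        exact Finset.mem_image_of_mem _ (by simp [hiR])
  · have h1 : (ℱ ∪ (Finset.univ \ R).image (fun i => ({i} : Finset (Fin n)))).card
        ≤ ℱ.card + (Finset.univ \ R).card :=
      le_trans (Finset.card_union_le _ _) (by gcongr; exact Finset.card_image_le)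
    have h2 : (Finset.univ \ R).card = n - R.card := by
      rw [Finset.card_sdiff_of_subset (Finset.subset_univ _)]; simp
    omega
  · intro T hT
    rw [Finset.mem_sdiff, Finset.mem_union] at hT
    rcases hT.1 with h | h
    · exact absurd h hT.2
    · rw [Finset.mem_image] at h
      obtain ⟨i, _, rfl⟩ := h
      exact ⟨i, rfl⟩
end

section
/- Let 𝒯 be a test cover of [n], let k ≥ 1, and let 𝒯* be obtained from 𝒯 by adding every singleton {i}, i ∈ [n], not already in 𝒯. Then 𝒯* contains a k-mini test cover if and only if 𝒯 contains a k-mini test cover. -/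
/-- Removing a singleton test decreases the number of classes by at most one. -/
lemma numClasses_erase_singleton {n : ℕ} (ℱ : Finset (Finset (Fin n))) (i0 : Fin n) :
    numClasses ℱ ≤ numClasses (ℱ.erase {i0}) + 1 := by
  classical
  set S : Finset (Fin n) := {i0} with hS
  set f : Fin n → Finset (Finset (Fin n)) := fun i => ℱ.filter (fun T => i ∈ T) with hf
  set I : Finset (Finset (Finset (Fin n))) := Finset.univ.image f with hI
  have himg : (Finset.univ.image fun i : Fin n => (ℱ.erase S).filter (fun T => i ∈ T))
      = I.image (fun A => A.erase S) := by
    rw [hI, Finset.image_image]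
    apply Finset.image_congr
    intro i _
    simp only [Function.comp_apply, hf, Finset.filter_erase]
  have ha : f i0 ∈ I := Finset.mem_image_of_mem f (Finset.mem_univ i0)
  have hsub : I.erase (f i0) ⊆ I.image (fun A => A.erase S) := by
    intro A hA
    obtain ⟨hne, hAI⟩ := Finset.mem_erase.mp hA
    have hSA : S ∉ A := by
      intro hSA
      obtain ⟨i, _, rfl⟩ := Finset.mem_image.mp hAI
      have : i ∈ S := (Finset.mem_filter.mp hSA).2
      rw [hS, Finset.mem_singleton] at this
      exact hne (by rw [this])
    have : A.erase S = A := Finset.erase_eq_of_notMem hSA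
    exact Finset.mem_image.mpr ⟨A, hAI, this⟩
  calc numClasses ℱ = I.card := rfl
    _ = (I.erase (f i0)).card + 1 := (Finset.card_erase_add_one ha).symm
    _ ≤ (I.image (fun A => A.erase S)).card + 1 := by
        exact Nat.add_le_add_right (Finset.card_le_card hsub) 1
    _ = numClasses (ℱ.erase S) + 1 := by rw [numClasses, himg]

lemma reduce_aux {n k : ℕ} (𝒯 : Finset (Finset (Fin n))) :
    ∀ m (ℱ : Finset (Finset (Fin n))), ℱ.card = m →
    ℱ ⊆ 𝒯 ∪ Finset.univ.image (fun i : Fin n => ({i} : Finset (Fin n))) →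
    ℱ.card + k ≤ numClasses ℱ →
    ∃ ℱ' : Finset (Finset (Fin n)), ℱ' ⊆ 𝒯 ∧ ℱ'.card ≤ ℱ.card ∧
      ℱ'.card + k ≤ numClasses ℱ' := by
  classical
  intro m
  induction m with
  | zero =>
      intro ℱ hcard _ hcl
      exact ⟨ℱ, by simp [Finset.card_eq_zero.mp hcard], le_refl _, hcl⟩
  | succ m ih =>
      intro ℱ hcard hsub hcl
      by_cases h : ℱ ⊆ 𝒯
      · exact ⟨ℱ, h, le_refl _, hcl⟩
      · obtain ⟨S, hSℱ, hS𝒯⟩ := Finset.not_subset.mp h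
        have hsing : ∃ i : Fin n, S = {i} := by
          have := hsub hSℱ
          rw [Finset.mem_union] at this
          rcases this with h1 | h1
          · exact absurd h1 hS𝒯
          · obtain ⟨i, _, rfl⟩ := Finset.mem_image.mp h1
            exact ⟨i, rfl⟩
        obtain ⟨i0, rfl⟩ := hsing
        set ℱ' := ℱ.erase {i0} with hℱ'
        have hcard' : ℱ'.card = m := by
          rw [hℱ', Finset.card_erase_of_mem hSℱ, hcard]; omega
        have hsub' : ℱ' ⊆ 𝒯 ∪ Finset.univ.image (fun i : Fin n => ({i} : Finset (Fin n))) :=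
          (Finset.erase_subset _ _).trans hsub
        have hcl' : ℱ'.card + k ≤ numClasses ℱ' := by
          have h1 := numClasses_erase_singleton ℱ i0
          rw [← hℱ'] at h1
          omega
        obtain ⟨ℱ'', h1, h2, h3⟩ := ih ℱ' hcard' hsub' hcl'
        exact ⟨ℱ'', h1, by omega, h3⟩

/-- Let `𝒯*` be obtained from a test cover `𝒯` by adding all
singletons. Then `𝒯*` contains a `k`-mini test cover iff `𝒯` does. -/
theorem statement_5 (n : ℕ) (𝒯 : Finset (Finset (Fin n))) (k : ℕ) (hk : 1 ≤ k)
    (h𝒯 : IsTestCover 𝒯) :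
    (∃ ℱ : Finset (Finset (Fin n)),
        ℱ ⊆ 𝒯 ∪ Finset.univ.image (fun i : Fin n => ({i} : Finset (Fin n))) ∧
        ℱ.card ≤ 2 * k ∧ ℱ.card + k ≤ numClasses ℱ) ↔
    (∃ ℱ : Finset (Finset (Fin n)), ℱ ⊆ 𝒯 ∧ ℱ.card ≤ 2 * k ∧
        ℱ.card + k ≤ numClasses ℱ) := by
  constructor
  · rintro ⟨ℱ, hsub, hcard, hcl⟩
    obtain ⟨ℱ', h1, h2, h3⟩ := reduce_aux 𝒯 ℱ.card ℱ rfl hsub hcl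
    exact ⟨ℱ', h1, le_trans h2 hcard, h3⟩
  · rintro ⟨ℱ, hsub, hcard, hcl⟩
    exact ⟨ℱ, hsub.trans (Finset.subset_union_left), hcard, hcl⟩
end

section
/- Let C be a finite set and let S₁, …, S_t be subsets of C such that for every pair of indices i < j, at least one of the four sets Sᵢ ∩ Sⱼ, Sᵢ \ Sⱼ, Sⱼ \ Sᵢ, C \ (Sᵢ ∪ Sⱼ) is empty. Then the equivalence relation on C defined by x ~ y iff for every i, x ∈ Sᵢ ⟺ y ∈ Sᵢ, has at most t + 1 equivalence classes. -/
/-- Let `C` be a finite set and `S 1, …, S t ⊆ C` such that for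
every pair `i < j` at least one of `Sᵢ ∩ Sⱼ`, `Sᵢ \ Sⱼ`, `Sⱼ \ Sᵢ`,
`C \ (Sᵢ ∪ Sⱼ)` is empty. Then the relation on `C` identifying elements that
belong to exactly the same sets `Sᵢ` has at most `t + 1` classes. -/
theorem statement_8 {α : Type*} [DecidableEq α] (C : Finset α) (t : ℕ)
    (S : Fin t → Finset α) (hsub : ∀ i, S i ⊆ C)
    (hpair : ∀ i j : Fin t, i < j →
      S i ∩ S j = ∅ ∨ S i \ S j = ∅ ∨ S j \ S i = ∅ ∨ C \ (S i ∪ S j) = ∅) :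
    (C.image (fun x => Finset.univ.filter (fun i : Fin t => x ∈ S i))).card
      ≤ t + 1 := by
  induction t with
  | zero =>
    refine le_trans (Finset.card_le_card (fun A hA => ?_))
      (by simp : ({∅} : Finset (Finset (Fin 0))).card ≤ 1)
    simp only [Finset.mem_image] at hA
    obtain ⟨x, -, rfl⟩ := hA
    simp
  | succ n ih =>
    set lst := Fin.last n with hlst
    set f : α → Finset (Fin (n+1)) := fun x => Finset.univ.filter (fun i => x ∈ S i) with hf
    set g : α → Finset (Fin n) := fun x => Finset.univ.filter (fun i => x ∈ S i.castSucc)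
      with hg
    have hIH : (C.image g).card ≤ n + 1 :=
      ih (fun i => S i.castSucc) (fun i => hsub _)
        (fun i j hij => hpair _ _ (by simpa using hij))
    set r : Finset (Fin (n+1)) → Finset (Fin n) :=
      fun A => Finset.univ.filter (fun i => i.castSucc ∈ A) with hr
    have hrf : ∀ x, r (f x) = g x := by
      intro x; ext i; simp [hr, hf, hg]
    set C1 := C.filter (fun x => x ∈ S lst) with hC1
    set C0 := C.filter (fun x => x ∉ S lst) with hC0
    have hCsplit : C1 ∪ C0 = C := Finset.filter_union_filter_not_eq _ C
    -- on a part where membership in `S lst` is constant, `f` and `g` induce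
    -- the same number of classes
    have hcard_eq : ∀ D : Finset α,
        (∀ x ∈ D, ∀ y ∈ D, (x ∈ S lst ↔ y ∈ S lst)) →
        (D.image f).card = (D.image g).card := by
      intro D hD
      have h1 : (D.image f).card = ((D.image f).image r).card := by
        refine (Finset.card_image_of_injOn ?_).symm
        intro A hA B hB hAB
        simp only [Finset.mem_coe, Finset.mem_image] at hA hB
        obtain ⟨x, hx, rfl⟩ := hA
        obtain ⟨y, hy, rfl⟩ := hB
        ext k
        refine Fin.lastCases ?_ (fun i => ?_) k
        · simpa [hf] using hD x hx y hy
        · have := Finset.ext_iff.mp hAB i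
          simpa [hr] using this
      rw [h1, Finset.image_image]
      congr 1
      exact Finset.image_congr (fun x _ => hrf x)
    have h1 : (C.image f).card ≤ (C1.image f).card + (C0.image f).card := by
      rw [← hCsplit, Finset.image_union]; exact Finset.card_union_le _ _
    have h2 : (C1.image f).card = (C1.image g).card := by
      refine hcard_eq C1 (fun x hx y hy => ?_)
      rw [hC1, Finset.mem_filter] at hx hy
      simp [hx.2, hy.2]
    have h3 : (C0.image f).card = (C0.image g).card := by
      refine hcard_eq C0 (fun x hx y hy => ?_)
      rw [hC0, Finset.mem_filter] at hx hy
      simp [hx.2, hy.2]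
    have h4 : (C1.image g).card + (C0.image g).card
        = (C1.image g ∪ C0.image g).card + (C1.image g ∩ C0.image g).card :=
      (Finset.card_union_add_card_inter _ _).symm
    have h5 : C1.image g ∪ C0.image g = C.image g := by
      rw [← Finset.image_union, hCsplit]
    -- key step: at most one class of the first `n` sets is split by `S lst`
    have key : ∀ (x x' y y' : α) (i : Fin n),
        x ∈ C → x ∉ S lst → x ∈ S i.castSucc →
        x' ∈ S lst → x' ∈ S i.castSucc →
        y ∈ C → y ∉ S lst → y ∉ S i.castSucc →
        y' ∈ S lst → y' ∉ S i.castSucc → False := by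
      intro x x' y y' i hxC hxl hxi hx'l hx'i hyC hyl hyi hy'l hy'i
      rcases hpair i.castSucc lst (Fin.castSucc_lt_last i) with h | h | h | h
      · exact Finset.notMem_empty x' (h ▸ Finset.mem_inter.mpr ⟨hx'i, hx'l⟩)
      · exact Finset.notMem_empty x (h ▸ Finset.mem_sdiff.mpr ⟨hxi, hxl⟩)
      · exact Finset.notMem_empty y' (h ▸ Finset.mem_sdiff.mpr ⟨hy'l, hy'i⟩)
      · refine Finset.notMem_empty y (h ▸ Finset.mem_sdiff.mpr ⟨hyC, ?_⟩)
        simp [hyi, hyl]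
    have h6 : (C1.image g ∩ C0.image g).card ≤ 1 := by
      refine Finset.card_le_one.mpr (fun A hA B hB => ?_)
      rw [Finset.mem_inter] at hA hB
      obtain ⟨a', ha'C1, ha'A⟩ := Finset.mem_image.mp hA.1
      obtain ⟨a, haC0, haA⟩ := Finset.mem_image.mp hA.2
      obtain ⟨b', hb'C1, hb'B⟩ := Finset.mem_image.mp hB.1
      obtain ⟨b, hbC0, hbB⟩ := Finset.mem_image.mp hB.2
      rw [hC1, Finset.mem_filter] at ha'C1 hb'C1
      rw [hC0, Finset.mem_filter] at haC0 hbC0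
      by_contra hAB
      have hnot : ¬ (A ⊆ B ∧ B ⊆ A) := fun ⟨u, v⟩ => hAB (Finset.Subset.antisymm u v)
      have hmemA : ∀ i : Fin n, i ∈ A ↔ a ∈ S i.castSucc := by
        intro i; rw [← haA]; simp [hg]
      have hmemA' : ∀ i : Fin n, i ∈ A ↔ a' ∈ S i.castSucc := by
        intro i; rw [← ha'A]; simp [hg]
      have hmemB : ∀ i : Fin n, i ∈ B ↔ b ∈ S i.castSucc := by
        intro i; rw [← hbB]; simp [hg]
      have hmemB' : ∀ i : Fin n, i ∈ B ↔ b' ∈ S i.castSucc := by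
        intro i; rw [← hb'B]; simp [hg]
      rcases not_and_or.mp hnot with h | h <;>
        obtain ⟨i, hi1, hi2⟩ := Finset.not_subset.mp h
      · exact key a a' b b' i haC0.1 haC0.2 ((hmemA i).mp hi1)
          ha'C1.2 ((hmemA' i).mp hi1)
          hbC0.1 hbC0.2 (fun h => hi2 ((hmemB i).mpr h))
          hb'C1.2 (fun h => hi2 ((hmemB' i).mpr h))
      · exact key b b' a a' i hbC0.1 hbC0.2 ((hmemB i).mp hi1)
          hb'C1.2 ((hmemB' i).mp hi1)
          haC0.1 haC0.2 (fun h => hi2 ((hmemA i).mpr h))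
          ha'C1.2 (fun h => hi2 ((hmemA' i).mpr h))
    calc (C.image f).card ≤ (C1.image f).card + (C0.image f).card := h1
      _ = (C1.image g).card + (C0.image g).card := by rw [h2, h3]
      _ = (C.image g).card + (C1.image g ∩ C0.image g).card := by rw [h4, h5]
      _ ≤ (n + 1) + 1 := Nat.add_le_add hIH h6
end

section
/- Let G be a finite undirected graph with vertex set {v₁, …, v_p} and edge set {e₁, …, e_q} with q ≥ 1. Define an instance of the test cover problem whose item set is {eᵢ : i ∈ [q]} ∪ {e'ᵢ : i ∈ [q]} (two disjoint copies of the edge set) and whose test collection is {Tⱼ : j ∈ [p]} ∪ {T'ᵢ : i ∈ [q−1]}, where Tⱼ = {eᵢ : vⱼ is an endpoint of eᵢ} and T'ᵢ = {eᵢ, e'ᵢ}. Then for every natural number t, G has a vertex cover of size at most t if and only if this test collection contains a subcollection of size at most q − 1 + t that is a test cover of the item set. -/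
/-- A test `T` on an item set `X` separates items `i`, `j` if exactly one of
them lies in `T`. -/
def SeparatesOn {X : Type*} (T : Finset X) (i j : X) : Prop :=
  (i ∈ T ∧ j ∉ T) ∨ (i ∉ T ∧ j ∈ T)

/-- A collection of tests is a test cover of the item set `X` if every pair of
distinct items is separated by some test in the collection. -/
def IsTestCoverOn {X : Type*} (𝒯 : Finset (Finset X)) : Prop :=
  ∀ i j : X, i ≠ j → ∃ T ∈ 𝒯, SeparatesOn T i j

namespace Stmt13Aux

variable {p q : ℕ}

/-- The vertex test `Tⱼ`. -/
def Tv (e : Fin q → Sym2 (Fin p)) (j : Fin p) : Finset (Fin q ⊕ Fin q) :=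
  (Finset.univ.filter (fun i : Fin q => j ∈ e i)).image Sum.inl

/-- The edge test `T'ᵢ`. -/
def Te (i : Fin q) : Finset (Fin q ⊕ Fin q) := {Sum.inl i, Sum.inr i}

@[simp] lemma inl_mem_Tv {e : Fin q → Sym2 (Fin p)} {j : Fin p} {i : Fin q} :
    Sum.inl i ∈ Tv e j ↔ j ∈ e i := by
  simp [Tv]

@[simp] lemma inr_mem_Tv {e : Fin q → Sym2 (Fin p)} {j : Fin p} {i : Fin q} :
    Sum.inr i ∉ Tv e j := by
  simp [Tv]

@[simp] lemma inl_mem_Te {i k : Fin q} : Sum.inl i ∈ Te k ↔ i = k := by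
  simp [Te]

@[simp] lemma inr_mem_Te {i k : Fin q} : Sum.inr i ∈ Te k ↔ i = k := by
  simp [Te]

lemma Te_inj : Function.Injective (Te (q := q)) := by
  intro a b h
  have : Sum.inr a ∈ Te b := h ▸ (by simp : Sum.inr a ∈ Te a)
  simpa using this

lemma filter_card (hq : 1 ≤ q) :
    (Finset.univ.filter (fun i : Fin q => (i : ℕ) + 1 < q)).card = q - 1 := by
  have hmem : (⟨q - 1, by omega⟩ : Fin q) ∈ (Finset.univ : Finset (Fin q)) :=
    Finset.mem_univ _
  have heq : (Finset.univ.filter (fun i : Fin q => (i : ℕ) + 1 < q))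
      = Finset.univ.erase ⟨q - 1, by omega⟩ := by
    ext i
    simp only [Finset.mem_filter, Finset.mem_erase, Finset.mem_univ, and_true,
      true_and]
    constructor
    · intro h hc
      rw [hc] at h
      simp at h
      omega
    · intro h
      have hi := i.isLt
      have : (i : ℕ) ≠ q - 1 := by
        intro hc
        exact h (Fin.ext hc)
      omega
  rw [heq, Finset.card_erase_of_mem hmem, Finset.card_univ, Fintype.card_fin]

end Stmt13Aux

open Stmt13Aux in
/-- Let `G` be a graph on vertices `v₁,…,v_p` with edges
`e₁,…,e_q`, `q ≥ 1`. Take as items two disjoint copies of the edge set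
(`Sum.inl i` is `eᵢ` and `Sum.inr i` is `e'ᵢ`) and as tests
`Tⱼ = {eᵢ : vⱼ ∈ eᵢ}` for `j ∈ [p]` together with `T'ᵢ = {eᵢ, e'ᵢ}` for
`i ∈ [q-1]`. Then `G` has a vertex cover of size at most `t` iff this test
collection contains a test cover of the items of size at most `q - 1 + t`. -/
theorem statement_13 (p q : ℕ) (hq : 1 ≤ q) (G : SimpleGraph (Fin p))
    [DecidableRel G.Adj] (e : Fin q → Sym2 (Fin p))
    (he_inj : Function.Injective e)
    (he_range : ∀ s, s ∈ G.edgeSet ↔ ∃ i, e i = s) (t : ℕ) :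
    (∃ U : Finset (Fin p), (∀ a b : Fin p, G.Adj a b → a ∈ U ∨ b ∈ U) ∧
      U.card ≤ t) ↔
    (∃ ℱ : Finset (Finset (Fin q ⊕ Fin q)),
      ℱ ⊆ (Finset.univ.image (fun j : Fin p =>
              (Finset.univ.filter (fun i : Fin q => j ∈ e i)).image Sum.inl))
          ∪ ((Finset.univ.filter (fun i : Fin q => (i : ℕ) + 1 < q)).image
              (fun i : Fin q => ({Sum.inl i, Sum.inr i} : Finset (Fin q ⊕ Fin q))))
      ∧ IsTestCoverOn ℱ ∧ ℱ.card ≤ q - 1 + t) := by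
  have hTv_eq : (fun j : Fin p =>
      (Finset.univ.filter (fun i : Fin q => j ∈ e i)).image Sum.inl) = Tv e := rfl
  have hTe_eq : (fun i : Fin q =>
      ({Sum.inl i, Sum.inr i} : Finset (Fin q ⊕ Fin q))) = Te := rfl
  rw [hTv_eq, hTe_eq]
  -- helper: for distinct indices, one of them has index `< q - 1`
  have hlt : ∀ i i' : Fin q, i ≠ i' → (i : ℕ) + 1 < q ∨ (i' : ℕ) + 1 < q := by
    intro i i' h
    have hi := i.isLt
    have hi' := i'.isLt
    have : (i : ℕ) ≠ (i' : ℕ) := fun hc => h (Fin.ext hc)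
    omega
  constructor
  · rintro ⟨U, hU, hUcard⟩
    -- for every edge there is a covering vertex in U
    have hedge : ∀ i : Fin q, ∃ j ∈ U, j ∈ e i := by
      intro i
      have hmem : e i ∈ G.edgeSet := (he_range _).2 ⟨i, rfl⟩
      obtain ⟨⟨a, b⟩, hab'⟩ := Quot.mk_surjective (e i)
      have hab : s(a, b) = e i := hab'
      rw [← hab] at hmem
      have hadj : G.Adj a b := hmem
      rcases hU a b hadj with h | h
      · exact ⟨a, h, by rw [← hab]; exact Sym2.mem_mk_left a b⟩
      · exact ⟨b, h, by rw [← hab]; exact Sym2.mem_mk_right a b⟩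
    refine ⟨U.image (Tv e) ∪
        (Finset.univ.filter (fun i : Fin q => (i : ℕ) + 1 < q)).image Te,
        ?_, ?_, ?_⟩
    · exact Finset.union_subset_union
        (Finset.image_subset_image (Finset.subset_univ U)) le_rfl
    · -- test cover
      have hTeF : ∀ i : Fin q, (i : ℕ) + 1 < q →
          Te i ∈ U.image (Tv e) ∪
            (Finset.univ.filter (fun i : Fin q => (i : ℕ) + 1 < q)).image Te := by
        intro i hi
        exact Finset.mem_union_right _ (Finset.mem_image_of_mem _ (by simp [hi]))
      intro x y hxy
      rcases x with i | i <;> rcases y with i' | i'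
      · -- inl, inl
        have hne : i ≠ i' := by simpa using hxy
        rcases hlt i i' hne with h | h
        · exact ⟨Te i, hTeF i h, Or.inl ⟨by simp, by simp [hne.symm]⟩⟩
        · exact ⟨Te i', hTeF i' h, Or.inr ⟨by simp [hne], by simp⟩⟩
      · -- inl, inr
        by_cases hii : i = i'
        · subst hii
          obtain ⟨j, hjU, hje⟩ := hedge i
          refine ⟨Tv e j, Finset.mem_union_left _ (Finset.mem_image_of_mem _ hjU),
            Or.inl ⟨by simp [hje], by simp⟩⟩
        · rcases hlt i i' hii with h | h
          · exact ⟨Te i, hTeF i h, Or.inl ⟨by simp, by simp [Ne.symm hii]⟩⟩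
          · exact ⟨Te i', hTeF i' h, Or.inr ⟨by simp [hii], by simp⟩⟩
      · -- inr, inl
        by_cases hii : i = i'
        · subst hii
          obtain ⟨j, hjU, hje⟩ := hedge i
          refine ⟨Tv e j, Finset.mem_union_left _ (Finset.mem_image_of_mem _ hjU),
            Or.inr ⟨by simp, by simp [hje]⟩⟩
        · rcases hlt i i' hii with h | h
          · exact ⟨Te i, hTeF i h, Or.inl ⟨by simp, by simp [Ne.symm hii]⟩⟩
          · exact ⟨Te i', hTeF i' h, Or.inr ⟨by simp [hii], by simp⟩⟩
      · -- inr, inr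
        have hne : i ≠ i' := by simpa using hxy
        rcases hlt i i' hne with h | h
        · exact ⟨Te i, hTeF i h, Or.inl ⟨by simp, by simp [hne.symm]⟩⟩
        · exact ⟨Te i', hTeF i' h, Or.inr ⟨by simp [hne], by simp⟩⟩
    · -- cardinality
      calc (U.image (Tv e) ∪
            (Finset.univ.filter (fun i : Fin q => (i : ℕ) + 1 < q)).image Te).card
          ≤ (U.image (Tv e)).card +
            ((Finset.univ.filter (fun i : Fin q => (i : ℕ) + 1 < q)).image Te).card :=
            Finset.card_union_le _ _
        _ ≤ U.card + (q - 1) := by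
            refine Nat.add_le_add (Finset.card_image_le) ?_
            calc ((Finset.univ.filter (fun i : Fin q => (i : ℕ) + 1 < q)).image Te).card
                ≤ (Finset.univ.filter (fun i : Fin q => (i : ℕ) + 1 < q)).card :=
                  Finset.card_image_le
              _ = q - 1 := filter_card hq
        _ ≤ q - 1 + t := by omega
  · rintro ⟨ℱ, hsub, hcov, hcard⟩
    -- classification of members of ℱ
    have hclass : ∀ A ∈ ℱ, (∃ j : Fin p, Tv e j = A) ∨
        (∃ k : Fin q, (k : ℕ) + 1 < q ∧ Te k = A) := by
      intro A hA
      rcases Finset.mem_union.1 (hsub hA) with h | h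
      · left
        obtain ⟨j, _, hj⟩ := Finset.mem_image.1 h
        exact ⟨j, hj⟩
      · right
        obtain ⟨k, hk, hk'⟩ := Finset.mem_image.1 h
        exact ⟨k, (Finset.mem_filter.1 hk).2, hk'⟩
    -- all edge tests are in ℱ
    have hTeF : ∀ i : Fin q, (i : ℕ) + 1 < q → Te i ∈ ℱ := by
      intro i hi
      set last : Fin q := ⟨q - 1, by omega⟩ with hlast
      have hne : (Sum.inr i : Fin q ⊕ Fin q) ≠ Sum.inr last := by
        simp only [ne_eq, Sum.inr.injEq]
        intro hc
        rw [hc] at hi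
        simp [hlast] at hi
        omega
      obtain ⟨A, hAF, hsep⟩ := hcov _ _ hne
      rcases hclass A hAF with ⟨j, rfl⟩ | ⟨k, hk, rfl⟩
      · rcases hsep with ⟨h1, _⟩ | ⟨_, h2⟩
        · exact absurd h1 inr_mem_Tv
        · exact absurd h2 inr_mem_Tv
      · rcases hsep with ⟨h1, _⟩ | ⟨_, h2⟩
        · have : i = k := inr_mem_Te.1 h1
          rwa [← this] at hAF
        · have : last = k := inr_mem_Te.1 h2
          rw [← this] at hk
          simp [hlast] at hk
          omega
    -- for each edge, some vertex test hitting it is in ℱ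
    have hTvF : ∀ i : Fin q, ∃ j : Fin p, Tv e j ∈ ℱ ∧ j ∈ e i := by
      intro i
      obtain ⟨A, hAF, hsep⟩ := hcov (Sum.inl i) (Sum.inr i) (by simp)
      rcases hclass A hAF with ⟨j, rfl⟩ | ⟨k, _, rfl⟩
      · rcases hsep with ⟨h1, _⟩ | ⟨_, h2⟩
        · exact ⟨j, hAF, inl_mem_Tv.1 h1⟩
        · exact absurd h2 inr_mem_Tv
      · rcases hsep with ⟨h1, h2⟩ | ⟨h1, h2⟩
        · exact absurd (inr_mem_Te.2 (inl_mem_Te.1 h1)) h2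
        · exact absurd (inl_mem_Te.2 (inr_mem_Te.1 h2)) h1
    -- the vertex cover: minimal representatives
    set U : Finset (Fin p) := Finset.univ.filter
      (fun j : Fin p => Tv e j ∈ ℱ ∧ ∀ j', Tv e j' = Tv e j → j ≤ j') with hUdef
    have hUmem : ∀ j, j ∈ U ↔ Tv e j ∈ ℱ ∧ ∀ j', Tv e j' = Tv e j → j ≤ j' := by
      intro j
      simp [hUdef]
    -- vertex cover property
    have hcover : ∀ a b : Fin p, G.Adj a b → a ∈ U ∨ b ∈ U := by
      intro a b hadj
      have hmem : s(a, b) ∈ G.edgeSet := hadj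
      obtain ⟨i, hi⟩ := (he_range _).1 hmem
      obtain ⟨j, hjF, hje⟩ := hTvF i
      set S : Finset (Fin p) := Finset.univ.filter (fun j' => Tv e j' = Tv e j)
        with hSdef
      have hSne : S.Nonempty := ⟨j, by simp [hSdef]⟩
      set j₀ : Fin p := S.min' hSne with hj₀def
      have hj₀S : Tv e j₀ = Tv e j := by
        have := S.min'_mem hSne
        simpa [hSdef] using this
      have hj₀min : ∀ j', Tv e j' = Tv e j₀ → j₀ ≤ j' := by
        intro j' hj'
        exact S.min'_le j' (by simp [hSdef, hj'.trans hj₀S])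
      have hj₀U : j₀ ∈ U := (hUmem j₀).2 ⟨hj₀S ▸ hjF, hj₀min⟩
      have hj₀e : j₀ ∈ e i := by
        have : Sum.inl i ∈ Tv e j₀ := by
          rw [hj₀S]
          simpa using hje
        exact inl_mem_Tv.1 this
      rw [hi] at hj₀e
      rcases Sym2.mem_iff.1 hj₀e with rfl | rfl
      · exact Or.inl hj₀U
      · exact Or.inr hj₀U
    refine ⟨U, hcover, ?_⟩
    -- cardinality bound
    have hinjU : Set.InjOn (Tv e) U := by
      intro a ha b hb hab
      have ha' := (hUmem a).1 ha
      have hb' := (hUmem b).1 hb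
      exact le_antisymm (ha'.2 b hab.symm) (hb'.2 a hab)
    have hdisj : Disjoint (U.image (Tv e))
        ((Finset.univ.filter (fun i : Fin q => (i : ℕ) + 1 < q)).image Te) := by
      rw [Finset.disjoint_left]
      intro A hA hA'
      obtain ⟨j, _, hj⟩ := Finset.mem_image.1 hA
      obtain ⟨k, _, hk⟩ := Finset.mem_image.1 hA'
      have : Sum.inr k ∈ Tv e j := by
        rw [hj, ← hk]
        simp
      exact inr_mem_Tv this
    have hsubF : U.image (Tv e) ∪
        (Finset.univ.filter (fun i : Fin q => (i : ℕ) + 1 < q)).image Te ⊆ ℱ := by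
      refine Finset.union_subset ?_ ?_
      · intro A hA
        obtain ⟨j, hjU, hj⟩ := Finset.mem_image.1 hA
        exact hj ▸ ((hUmem j).1 hjU).1
      · intro A hA
        obtain ⟨k, hk, hk'⟩ := Finset.mem_image.1 hA
        exact hk' ▸ hTeF k (Finset.mem_filter.1 hk).2
    have hkey : U.card + (q - 1) ≤ ℱ.card := by
      have h1 : (U.image (Tv e)).card = U.card := Finset.card_image_of_injOn hinjU
      have h2 : ((Finset.univ.filter (fun i : Fin q => (i : ℕ) + 1 < q)).image Te).card
          = q - 1 := by
        rw [Finset.card_image_of_injective _ Te_inj, filter_card hq]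
      calc U.card + (q - 1)
          = (U.image (Tv e) ∪
            (Finset.univ.filter (fun i : Fin q => (i : ℕ) + 1 < q)).image Te).card := by
            rw [Finset.card_union_of_disjoint hdisj, h1, h2]
        _ ≤ ℱ.card := Finset.card_le_card hsubF
    omega
end

section
/- If 𝒯 is a test cover of [n] with n ≥ 1, then 𝒯 contains a subcollection of size at most n − 1 that is a test cover of [n]. -/
def sig' {n : ℕ} (ℱ : Finset (Finset (Fin n))) (i : Fin n) : Finset (Finset (Fin n)) :=
  ℱ.filter (fun T => i ∈ T)

lemma numClasses_def {n : ℕ} (ℱ : Finset (Finset (Fin n))) :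
    numClasses ℱ = (Finset.univ.image (sig' ℱ)).card := rfl

lemma sig'_eq_iff {n : ℕ} (X : Finset (Finset (Fin n))) (i j : Fin n) :
    sig' X i = sig' X j ↔ ∀ S ∈ X, (i ∈ S ↔ j ∈ S) := by
  constructor
  · intro h S hS
    constructor
    · intro hi
      have : S ∈ sig' X i := Finset.mem_filter.mpr ⟨hS, hi⟩
      rw [h] at this
      exact (Finset.mem_filter.mp this).2
    · intro hj
      have : S ∈ sig' X j := Finset.mem_filter.mpr ⟨hS, hj⟩
      rw [← h] at this
      exact (Finset.mem_filter.mp this).2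
  · intro h
    apply Finset.filter_congr
    intro S hS
    simp [h S hS]

lemma sig'_inter {n : ℕ} {𝒢 ℱ : Finset (Finset (Fin n))} (h : 𝒢 ⊆ ℱ) (i : Fin n) :
    sig' 𝒢 i = sig' ℱ i ∩ 𝒢 := by
  ext S
  simp only [sig', Finset.mem_filter, Finset.mem_inter]
  tauto

lemma image_sig'_subset {n : ℕ} {𝒢 ℱ : Finset (Finset (Fin n))} (h : 𝒢 ⊆ ℱ) :
    (Finset.univ.image (sig' 𝒢)) = (Finset.univ.image (sig' ℱ)).image (fun s => s ∩ 𝒢) := by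
  rw [Finset.image_image]
  apply Finset.image_congr
  intro i _
  exact sig'_inter h i

lemma numClasses_mono {n : ℕ} {𝒢 ℱ : Finset (Finset (Fin n))} (h : 𝒢 ⊆ ℱ) :
    numClasses 𝒢 ≤ numClasses ℱ := by
  rw [numClasses_def, numClasses_def, image_sig'_subset h]
  exact Finset.card_image_le

lemma sig'_transfer {n : ℕ} {𝒢 ℱ : Finset (Finset (Fin n))} (h : 𝒢 ⊆ ℱ)
    (heq : numClasses 𝒢 = numClasses ℱ) {i j : Fin n}
    (hs : sig' 𝒢 i = sig' 𝒢 j) : sig' ℱ i = sig' ℱ j := by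
  have hinj : Set.InjOn (fun s => s ∩ 𝒢) (Finset.univ.image (sig' ℱ)) := by
    rw [← Finset.card_image_iff, ← image_sig'_subset h, ← numClasses_def, ← numClasses_def, heq]
  apply hinj (Finset.mem_image_of_mem _ (Finset.mem_univ i))
    (Finset.mem_image_of_mem _ (Finset.mem_univ j))
  show sig' ℱ i ∩ 𝒢 = sig' ℱ j ∩ 𝒢
  rw [← sig'_inter h, ← sig'_inter h]; exact hs

lemma card_image_eq_of_ker {α β γ : Type*} [Fintype α] [DecidableEq β] [DecidableEq γ]
    (f : α → β) (g : α → γ) (h : ∀ i j, f i = f j ↔ g i = g j) :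
    (Finset.univ.image f).card = (Finset.univ.image g).card := by
  classical
  apply Finset.card_bij (fun b hb => g (Finset.mem_image.mp hb).choose)
  · intro b hb
    exact Finset.mem_image_of_mem _ (Finset.mem_univ _)
  · intro b1 hb1 b2 hb2 hg
    have h1 := (Finset.mem_image.mp hb1).choose_spec.2
    have h2 := (Finset.mem_image.mp hb2).choose_spec.2
    rw [← h1, ← h2]
    exact (h _ _).mpr hg
  · intro c hc
    obtain ⟨a, _, rfl⟩ := Finset.mem_image.mp hc
    refine ⟨f a, Finset.mem_image_of_mem _ (Finset.mem_univ a), ?_⟩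
    have := (Finset.mem_image.mp (Finset.mem_image_of_mem f (Finset.mem_univ a))).choose_spec.2
    exact (h _ _).mp this

lemma key {n : ℕ} (hn : 1 ≤ n) (ℱ : Finset (Finset (Fin n))) :
    ∃ 𝒢 ⊆ ℱ, numClasses 𝒢 = numClasses ℱ ∧ 𝒢.card + 1 ≤ numClasses 𝒢 := by
  induction ℱ using Finset.strongInduction with
  | _ ℱ ih =>
    rcases ℱ.eq_empty_or_nonempty with rfl | ⟨T, hT⟩
    · refine ⟨∅, subset_rfl, rfl, ?_⟩
      have hne : (Finset.univ.image (sig' (∅ : Finset (Finset (Fin n))))).Nonempty :=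
        ⟨_, Finset.mem_image_of_mem _ (Finset.mem_univ (⟨0, hn⟩ : Fin n))⟩
      simpa [numClasses_def] using hne.card_pos
    · set ℱ' := ℱ.erase T with hℱ'
      have hins : insert T ℱ' = ℱ := by rw [hℱ']; exact Finset.insert_erase hT
      obtain ⟨𝒢, h𝒢sub, h𝒢eq, h𝒢card⟩ := ih ℱ' (Finset.erase_ssubset hT)
      by_cases hc : numClasses ℱ' = numClasses ℱ
      · exact ⟨𝒢, h𝒢sub.trans (Finset.erase_subset _ _), h𝒢eq.trans hc, h𝒢card⟩
      · have hlt : numClasses ℱ' < numClasses ℱ :=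
          lt_of_le_of_ne (numClasses_mono (Finset.erase_subset _ _)) hc
        have hkey : ∀ i j : Fin n,
            sig' (insert T 𝒢) i = sig' (insert T 𝒢) j ↔
            sig' (insert T ℱ') i = sig' (insert T ℱ') j := by
          intro i j
          rw [sig'_eq_iff, sig'_eq_iff]
          simp only [Finset.mem_insert, forall_eq_or_imp]
          constructor
          · rintro ⟨hT', hrest⟩
            refine ⟨hT', ?_⟩
            intro S hS
            have : sig' ℱ' i = sig' ℱ' j :=
              sig'_transfer h𝒢sub h𝒢eq ((sig'_eq_iff _ _ _).mpr hrest)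
            exact (sig'_eq_iff _ _ _).mp this S hS
          · rintro ⟨hT', hrest⟩
            exact ⟨hT', fun S hS => hrest S (h𝒢sub hS)⟩
        have h1 : numClasses (insert T 𝒢) = numClasses ℱ := by
          calc numClasses (insert T 𝒢)
              = numClasses (insert T ℱ') := by
                rw [numClasses_def, numClasses_def]
                exact card_image_eq_of_ker _ _ hkey
            _ = numClasses ℱ := by rw [hins]
        refine ⟨insert T 𝒢, ?_, h1, ?_⟩
        · exact Finset.insert_subset hT (h𝒢sub.trans (Finset.erase_subset _ _))
        · have hcard : (insert T 𝒢).card ≤ 𝒢.card + 1 := Finset.card_insert_le _ _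
          rw [h1]
          omega

/-- Every test cover `𝒯` of `[n]`, `n ≥ 1`, contains a test
cover of size at most `n - 1`. -/
theorem statement_16 (n : ℕ) (hn : 1 ≤ n) (𝒯 : Finset (Finset (Fin n)))
    (h𝒯 : IsTestCover 𝒯) :
    ∃ ℱ : Finset (Finset (Fin n)), ℱ ⊆ 𝒯 ∧ IsTestCover ℱ ∧ ℱ.card ≤ n - 1 := by
  have hT : numClasses 𝒯 = n := by
    rw [numClasses_def]
    rw [Finset.card_image_of_injOn]
    · simp
    · intro i _ j _ hij
      by_contra hne
      obtain ⟨T, hT, hsep⟩ := h𝒯 i j hne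
      have := (sig'_eq_iff 𝒯 i j).mp hij T hT
      rcases hsep with ⟨h1, h2⟩ | ⟨h1, h2⟩ <;> tauto
  obtain ⟨𝒢, h𝒢sub, h𝒢eq, h𝒢card⟩ := key hn 𝒯
  refine ⟨𝒢, h𝒢sub, ?_, ?_⟩
  · intro i j hij
    have hinj : Set.InjOn (sig' 𝒢) (Finset.univ : Finset (Fin n)) := by
      rw [← Finset.card_image_iff]
      rw [← numClasses_def, h𝒢eq, hT]
      simp
    have hne : sig' 𝒢 i ≠ sig' 𝒢 j := by
      intro h
      exact hij (hinj (Finset.mem_univ i) (Finset.mem_univ j) h)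
    have hne' : ¬ ∀ S ∈ 𝒢, (i ∈ S ↔ j ∈ S) := fun h => hne ((sig'_eq_iff _ _ _).mpr h)
    push_neg at hne'
    obtain ⟨S, hS, hSne⟩ := hne'
    refine ⟨S, hS, ?_⟩
    by_cases hi : i ∈ S <;> by_cases hj : j ∈ S <;> simp [Separates, hi, hj] at hSne ⊢ <;> tauto
  · rw [h𝒢eq, hT] at h𝒢card
    omega
end

section
/- Let ℱ be a collection of subsets of [n], let C be a class induced by ℱ, and let S, S' ⊆ [n] be tests such that the four sets C ∩ S ∩ S', C ∩ (S \ S'), C ∩ (S' \ S), and C \ (S ∪ S') are all nonempty. Then the number of classes induced by ℱ ∪ {S, S'} is at least the number of classes induced by ℱ plus 3. -/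
/-- If `C` is a class induced by `ℱ` and tests `S`, `S'` split
`C` into four nonempty regions, then `ℱ ∪ {S, S'}` induces at least three more
classes than `ℱ`. -/
theorem statement_17 (n : ℕ) (ℱ : Finset (Finset (Fin n))) (C : Finset (Fin n))
    (hC : ∃ i : Fin n, C = classOf ℱ i) (S S' : Finset (Fin n))
    (h1 : (C ∩ S ∩ S').Nonempty) (h2 : (C ∩ (S \ S')).Nonempty)
    (h3 : (C ∩ (S' \ S)).Nonempty) (h4 : (C \ (S ∪ S')).Nonempty) :
    numClasses ℱ + 3 ≤ numClasses (insert S (insert S' ℱ)) := by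
  classical
  obtain ⟨i, rfl⟩ := hC
  obtain ⟨a, ha⟩ := h1
  obtain ⟨b, hb⟩ := h2
  obtain ⟨c, hc⟩ := h3
  obtain ⟨d, hd⟩ := h4
  simp only [Finset.mem_inter, Finset.mem_sdiff, Finset.mem_union, not_or] at ha hb hc hd
  set ℱ' : Finset (Finset (Fin n)) := insert S (insert S' ℱ) with hℱ'
  set f : Fin n → Finset (Finset (Fin n)) := fun x => ℱ.filter (fun T => x ∈ T) with hf
  set g : Fin n → Finset (Finset (Fin n)) := fun x => ℱ'.filter (fun T => x ∈ T) with hg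
  set π : Finset (Finset (Fin n)) → Finset (Finset (Fin n)) := fun A => A.filter (· ∈ ℱ) with hπ
  have hπg : ∀ x, π (g x) = f x := by
    intro x
    ext T
    simp only [hπ, hg, hf, hℱ', Finset.mem_filter, Finset.mem_insert]
    tauto
  have hmemS : ∀ x, S ∈ g x ↔ x ∈ S := by
    intro x
    simp [hg, hℱ']
  have hmemS' : ∀ x, S' ∈ g x ↔ x ∈ S' := by
    intro x
    simp [hg, hℱ']
  have hfC : ∀ x ∈ classOf ℱ i, f x = f i := by
    intro x hx
    simp only [classOf, Finset.mem_filter] at hx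
    ext T
    simp only [hf, Finset.mem_filter]
    exact ⟨fun ⟨h, h'⟩ => ⟨h, (hx.2 T h).mpr h'⟩, fun ⟨h, h'⟩ => ⟨h, (hx.2 T h).mp h'⟩⟩
  -- the four witnesses have pairwise distinct g-values
  have hab : g a ≠ g b := fun h => hb.2.2 (by rw [← hmemS' b, ← h, hmemS']; exact ha.2)
  have hac : g a ≠ g c := fun h => hc.2.2 (by rw [← hmemS c, ← h, hmemS]; exact ha.1.2)
  have had : g a ≠ g d := fun h => hd.2.1 (by rw [← hmemS d, ← h, hmemS]; exact ha.1.2)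
  have hbc : g b ≠ g c := fun h => hc.2.2 (by rw [← hmemS c, ← h, hmemS]; exact hb.2.1)
  have hbd : g b ≠ g d := fun h => hd.2.1 (by rw [← hmemS d, ← h, hmemS]; exact hb.2.1)
  have hcd : g c ≠ g d := fun h => hd.2.2 (by rw [← hmemS' d, ← h, hmemS']; exact hc.2.1)
  set F : Finset (Finset (Finset (Fin n))) := Finset.univ.image f with hF
  set G : Finset (Finset (Finset (Fin n))) := Finset.univ.image g with hG
  show F.card + 3 ≤ G.card
  set K : Finset (Finset (Finset (Fin n))) := {g a, g b, g c, g d} with hK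
  have hKG : K ⊆ G := by
    intro x hx
    simp only [hK, Finset.mem_insert, Finset.mem_singleton] at hx
    rcases hx with h | h | h | h <;> subst h <;>
      exact Finset.mem_image.mpr ⟨_, Finset.mem_univ _, rfl⟩
  have hK4 : K.card = 4 := by
    simp only [hK]
    rw [Finset.card_insert_of_notMem (by simp [hab, hac, had]),
        Finset.card_insert_of_notMem (by simp [hbc, hbd]),
        Finset.card_insert_of_notMem (by simp [hcd]),
        Finset.card_singleton]
  have hsplit : (G \ K).card + 4 = G.card := by
    rw [← hK4]; exact Finset.card_sdiff_add_card_eq_card hKG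
  have hsub : F \ {f i} ⊆ (G \ K).image π := by
    intro y hy
    simp only [hF, Finset.mem_sdiff, Finset.mem_image, Finset.mem_singleton] at hy
    obtain ⟨⟨x, -, rfl⟩, hy2⟩ := hy
    refine Finset.mem_image.mpr ⟨g x, ?_, hπg x⟩
    rw [Finset.mem_sdiff]
    refine ⟨Finset.mem_image.mpr ⟨x, Finset.mem_univ _, rfl⟩, ?_⟩
    intro hxK
    simp only [hK, Finset.mem_insert, Finset.mem_singleton] at hxK
    have : f x = f i := by
      rcases hxK with h | h | h | h <;>
        rw [← hπg x, h, hπg] <;> [exact hfC a ha.1.1; exact hfC b hb.1;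
          exact hfC c hc.1; exact hfC d hd.1]
    exact hy2 this
  have h5 : F.card ≤ (G \ K).card + 1 := by
    calc F.card ≤ (F \ {f i}).card + 1 := by
          have := Finset.card_sdiff_add_card_eq_card (Finset.inter_subset_left : F ∩ {f i} ⊆ F)
          have h6 : (F ∩ {f i}).card ≤ 1 := by
            calc (F ∩ {f i}).card ≤ ({f i} : Finset _).card :=
                  Finset.card_le_card Finset.inter_subset_right
              _ = 1 := Finset.card_singleton _
          calc F.card = (F \ (F ∩ {f i})).card + (F ∩ {f i}).card := this.symm
            _ ≤ (F \ {f i}).card + 1 := by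
                rw [Finset.sdiff_inter_self_left]; omega
      _ ≤ ((G \ K).image π).card + 1 := by
          exact Nat.add_le_add_right (Finset.card_le_card hsub) 1
      _ ≤ (G \ K).card + 1 := Nat.add_le_add_right Finset.card_image_le 1
  omega
end
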